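/- The joint optimization of the non-linear harvested power over (X, α) decouples: the optimal value of max over PSD X with tr(X) ≤ P_max and row-stochastic α of Σ_l f_l(Σ_n α_{nl}·h_n^H X h_n) equals max over φ ≥ 0 with Σ_l φ_l ≤ P_max·λ_max(H^H H) of Σ_l f_l(φ_l), where each f_l is increasing. -/

import Mathlib

/-!
Write `q_n(X) = h_nᴴ X h_n ≥ 0` and `φ_l = ∑_n α_{nl} q_n(X)`. Since `α` is row-stochastic,
`∑_l φ_l = ∑_n q_n(X) = tr(HᴴH X)`, and diagonalising `HᴴH` bounds this by `λ_max tr X`.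
Conversely every total `s ∈ [0, P_max λ_max]` is attained by `X = c u uᴴ` with `u` a unit
top eigenvector, and every nonnegative split `φ` of that total is realised by
`α_{nl} = φ_l / ∑ φ`. Hence the achievable vectors `φ` are exactly the feasible set on the right,
and the two sets of objective values coincide.
-/

open scoped ComplexOrder
open Matrix

section RowStochastic

variable {ι κ : Type*} [Fintype ι] [Fintype κ]

theorem sum_sum_mul_eq_of_sum_eq_one {α : κ → ι → ℝ} (hα : ∀ n, ∑ l, α n l = 1) (q : κ → ℝ) :
    ∑ l, ∑ n, α n l * q n = ∑ n, q n := by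
  rw [Finset.sum_comm]
  simp only [← Finset.sum_mul, hα, one_mul]

theorem exists_rowStochastic_sum_mul_eq [Nonempty ι] {φ : ι → ℝ} (hφ : ∀ l, 0 ≤ φ l)
    (q : κ → ℝ) (hsum : ∑ l, φ l = ∑ n, q n) :
    ∃ α : κ → ι → ℝ, (∀ n l, 0 ≤ α n l ∧ α n l ≤ 1) ∧ (∀ n, ∑ l, α n l = 1) ∧
      ∀ l, ∑ n, α n l * q n = φ l := by
  rcases (Finset.sum_nonneg fun l _ => hφ l : 0 ≤ ∑ l, φ l).eq_or_lt with hS | hS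
  · have hφ0 : ∀ l, φ l = 0 := fun l =>
      (Finset.sum_eq_zero_iff_of_nonneg fun l _ => hφ l).mp hS.symm l (Finset.mem_univ l)
    have hcard : (0 : ℝ) < Fintype.card ι := Nat.cast_pos.mpr Fintype.card_pos
    refine ⟨fun _ _ => (Fintype.card ι : ℝ)⁻¹, fun _ _ => ⟨by positivity, ?_⟩, fun _ => ?_,
      fun l => ?_⟩
    · exact inv_le_one_of_one_le₀ (Nat.one_le_cast.mpr Fintype.card_pos)
    · simp [hcard.ne']
    · simp [← Finset.mul_sum, ← hsum, hφ0]
  · set S := ∑ l, φ l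
    refine ⟨fun _ l => φ l / S, fun _ l => ⟨div_nonneg (hφ l) hS.le, ?_⟩, fun _ => ?_,
      fun l => ?_⟩
    · exact div_le_one_of_le₀ (Finset.single_le_sum (fun l _ => hφ l) (Finset.mem_univ l)) hS.le
    · rw [← Finset.sum_div, div_self hS.ne']
    · rw [← Finset.mul_sum, ← hsum, div_mul_cancel₀ _ hS.ne']

end RowStochastic

section Trace

variable {𝕜 : Type*} [RCLike 𝕜] {ι n : Type*} [Fintype ι] [Fintype n]

theorem trace_conjTranspose_mul_self_mul (H : Matrix ι n 𝕜) (X : Matrix n n 𝕜) :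
    (Hᴴ * H * X).trace = ∑ i, H i ⬝ᵥ X *ᵥ star (H i) := by
  rw [Matrix.mul_assoc, trace_mul_comm, Matrix.mul_assoc]
  simp only [trace, diag, mul_apply, dotProduct, mulVec, conjTranspose_apply, Pi.star_apply,
    Finset.mul_sum]

variable [DecidableEq n]

theorem re_trace_mul_le_iSup_eigenvalues_mul {A X : Matrix n n 𝕜} (hA : A.IsHermitian)
    (hX : X.PosSemidef) :
    RCLike.re (A * X).trace ≤ (⨆ i, hA.eigenvalues i) * RCLike.re X.trace := by
  set U : Matrix n n 𝕜 := ↑hA.eigenvectorUnitary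
  set Y := star U * X * U
  have hY : Y.PosSemidef := hX.conjTranspose_mul_mul_same U
  have hAX : (A * X).trace = (diagonal (RCLike.ofReal ∘ hA.eigenvalues) * Y).trace := by
    conv_lhs => rw [hA.spectral_theorem, Unitary.conjStarAlgAut_apply]
    simp only [Y, Matrix.mul_assoc]
    rw [trace_mul_comm]
    simp only [Matrix.mul_assoc]
    rfl
  have hXY : X.trace = Y.trace := by
    rw [trace_mul_cycle, Unitary.mul_star_self_of_mem hA.eigenvectorUnitary.2, Matrix.one_mul]
  rw [hAX, hXY, trace, trace, map_sum, map_sum, Finset.mul_sum]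
  refine Finset.sum_le_sum fun i _ => ?_
  rw [diag_apply, diag_apply, diagonal_mul, Function.comp_apply, RCLike.re_ofReal_mul]
  exact mul_le_mul_of_nonneg_right (le_ciSup (Set.finite_range _).bddAbove i)
    (RCLike.nonneg_iff.mp hY.diag_nonneg).1

theorem exists_posSemidef_re_trace_le_re_trace_mul_eq [Nonempty n] {A : Matrix n n 𝕜}
    (hA : A.IsHermitian) {P s : ℝ} (hP : 0 ≤ P) (hs : 0 ≤ s)
    (hsP : s ≤ P * ⨆ i, hA.eigenvalues i) :
    ∃ X : Matrix n n 𝕜, X.PosSemidef ∧ RCLike.re X.trace ≤ P ∧ RCLike.re (A * X).trace = s := by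
  rcases hs.eq_or_lt with rfl | hs
  · exact ⟨0, .zero, by simpa using hP, by simp⟩
  obtain ⟨i, hi⟩ := exists_eq_ciSup_of_finite (f := hA.eigenvalues)
  set μ := ⨆ i, hA.eigenvalues i
  have hμ : 0 < μ := pos_of_mul_pos_right (hs.trans_le hsP) hP
  have hu : ⇑(hA.eigenvectorBasis i) ⬝ᵥ star ⇑(hA.eigenvectorBasis i) = 1 := by
    rw [← EuclideanSpace.inner_eq_star_dotProduct, inner_self_eq_norm_sq_to_K,
      hA.eigenvectorBasis.orthonormal.1 i]
    simp
  refine ⟨(s / μ) • vecMulVec _ (star _),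
    (posSemidef_vecMulVec_self_star ⇑(hA.eigenvectorBasis i)).smul (div_nonneg hs.le hμ.le),
    ?_, ?_⟩
  · simpa [hu, RCLike.smul_re, div_le_iff₀ hμ] using hsP
  · rw [mul_smul_comm, mul_vecMulVec, hA.mulVec_eigenvectorBasis, hi]
    simp [hu, RCLike.smul_re, hμ.ne']

end Trace

theorem stmt_12_general {M N L : ℕ} (hM : 0 < M) (hL : 0 < L)
    (h : Fin N → Fin M → ℂ) (H : Matrix (Fin N) (Fin M) ℂ)
    (hH : ∀ n m, H n m = star (h n m))
    (f : Fin L → ℝ → ℝ)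
    (Pmax : ℝ) (hP : 0 < Pmax)
    (hA : (Hᴴ * H).IsHermitian) :
    haveI : Nonempty (Fin M) := Fin.pos_iff_nonempty.mp hM
    sSup {v : ℝ | ∃ (X : Matrix (Fin M) (Fin M) ℂ) (α : Fin N → Fin L → ℝ),
        X.PosSemidef ∧ (X.trace).re ≤ Pmax ∧
        (∀ n l, 0 ≤ α n l ∧ α n l ≤ 1) ∧ (∀ n, ∑ l, α n l = 1) ∧
        v = ∑ l, f l (∑ n, α n l * (star (h n) ⬝ᵥ X.mulVec (h n)).re)} =
      sSup {v : ℝ | ∃ φ : Fin L → ℝ, (∀ l, 0 ≤ φ l) ∧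
        (∑ l, φ l ≤ Pmax * ⨆ i, hA.eigenvalues i) ∧ v = ∑ l, f l (φ l)} := by
  have : Nonempty (Fin M) := Fin.pos_iff_nonempty.mp hM
  have : Nonempty (Fin L) := Fin.pos_iff_nonempty.mp hL
  have hsum : ∀ X : Matrix (Fin M) (Fin M) ℂ,
      ∑ n, (star (h n) ⬝ᵥ X *ᵥ h n).re = (Hᴴ * H * X).trace.re := by
    have hrow : ∀ n, H n = star (h n) := fun n => funext (hH n)
    intro X
    simp only [trace_conjTranspose_mul_self_mul, Complex.re_sum, hrow, star_star]
  have hμ : 0 ≤ ⨆ i, hA.eigenvalues i :=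
    ((posSemidef_conjTranspose_mul_self H).eigenvalues_nonneg (Classical.arbitrary _)).trans
      (le_ciSup (Set.finite_range _).bddAbove _)
  congr 1
  ext v
  constructor
  · rintro ⟨X, α, hX, hXtr, hα, hαs, rfl⟩
    refine ⟨fun l => ∑ n, α n l * (star (h n) ⬝ᵥ X *ᵥ h n).re, fun l => Finset.sum_nonneg fun n _ => mul_nonneg (hα n l).1
      (RCLike.nonneg_iff.mp (hX.dotProduct_mulVec_nonneg (h n))).1, ?_, rfl⟩
    rw [sum_sum_mul_eq_of_sum_eq_one hαs, hsum, mul_comm Pmax]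
    exact (re_trace_mul_le_iSup_eigenvalues_mul hA hX).trans
      (mul_le_mul_of_nonneg_left hXtr hμ)
  · rintro ⟨φ, hφ, hφs, rfl⟩
    obtain ⟨X, hX, hXtr, hXs⟩ := exists_posSemidef_re_trace_le_re_trace_mul_eq hA hP.le
      (Finset.sum_nonneg fun l _ => hφ l) hφs
    obtain ⟨α, hα, hαs, hαφ⟩ := exists_rowStochastic_sum_mul_eq hφ
      (fun n => (star (h n) ⬝ᵥ X *ᵥ h n).re) (by rw [hsum]; exact hXs.symm)
    exact ⟨X, α, hX, hXtr, hα, hαs, by simp only [hαφ]⟩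

theorem stmt_12 {M N L : ℕ} (hM : 0 < M) (hN : 0 < N) (hL : 0 < L)
    (h : Fin N → Fin M → ℂ) (H : Matrix (Fin N) (Fin M) ℂ)
    (hH : ∀ n m, H n m = star (h n m))
    (f : Fin L → ℝ → ℝ) (hf : ∀ l, Monotone (f l))
    (Pmax : ℝ) (hP : 0 < Pmax)
    (hA : (Hᴴ * H).IsHermitian) :
    haveI : Nonempty (Fin M) := Fin.pos_iff_nonempty.mp hM
    sSup {v : ℝ | ∃ (X : Matrix (Fin M) (Fin M) ℂ) (α : Fin N → Fin L → ℝ),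
        X.PosSemidef ∧ (X.trace).re ≤ Pmax ∧
        (∀ n l, 0 ≤ α n l ∧ α n l ≤ 1) ∧ (∀ n, ∑ l, α n l = 1) ∧
        v = ∑ l, f l (∑ n, α n l * (star (h n) ⬝ᵥ X.mulVec (h n)).re)} =
      sSup {v : ℝ | ∃ φ : Fin L → ℝ, (∀ l, 0 ≤ φ l) ∧
        (∑ l, φ l ≤ Pmax * ⨆ i, hA.eigenvalues i) ∧ v = ∑ l, f l (φ l)} :=
  stmt_12_general hM hL h H hH f Pmax hP hA
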